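/- Let C₁, C₂ ∈ ℝ^{d×d} be symmetric positive definite with C₁² ≥ C₂² (i.e., C₁² − C₂² positive semidefinite). Then the Gaussian kernels satisfy k^{C₁} ⪯ (det C₁/det C₂)·k^{C₂}, where k^C(x,y) = exp(−‖C⁻¹(x−y)‖²). -/

import Mathlib

open Matrix

/-- `KerLE k₁ k₂` means `k₁ ⪯ k₂`. -/
def KerLE {S : Type*} (k₁ k₂ : S → S → ℝ) : Prop :=
  ∀ (n : ℕ) (α : Fin n → ℝ) (x : Fin n → S),
    ∑ i, ∑ j, α i * α j * k₁ (x i) (x j) ≤ ∑ i, ∑ j, α i * α j * k₂ (x i) (x j)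

/-- Gaussian kernel on `ℝ^d` with positive definite covariance matrix `C`. -/
noncomputable def gaussKer {d : ℕ} (C : Matrix (Fin d) (Fin d) ℝ) : (Fin d → ℝ) → (Fin d → ℝ) → ℝ :=
  fun x y => Real.exp (-((x - y) ⬝ᵥ (C⁻¹ ^ 2).mulVec (x - y)))

/-!
Bochner's representation of the Gaussian kernel: for symmetric invertible `C`,
`k^C(x, y) = |det C| (4π)^(-d/2) ∫ exp(-ξᵀC²ξ/4) cos((x - y)·ξ) dξ`, obtained from the Fourier
transform of the standard Gaussian by the substitution `ξ = C⁻¹η`. Hence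
`∑ αᵢαⱼ k^C(xᵢ, xⱼ)` is `|det C| (4π)^(-d/2)` times the integral of the weight `exp(-ξᵀC²ξ/4)`
against `|∑ αᵢ exp(i xᵢ·ξ)|² ≥ 0`, and `C₁² ≥ C₂²` makes the weight of `C₁` pointwise smaller
than that of `C₂`.
-/

open MeasureTheory Real

section ChangeOfVariables

variable {ι E : Type*} [Fintype ι] [DecidableEq ι] [NormedAddCommGroup E]
  {M : Matrix ι ι ℝ}

lemma measurableEmbedding_mulVec (hM : M.det ≠ 0) : MeasurableEmbedding (M *ᵥ ·) :=
  letI := M.invertibleOfIsUnitDet hM.isUnit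
  (M.toLinearEquiv' this).toContinuousLinearEquiv.toHomeomorph.measurableEmbedding

lemma map_mulVec_volume (hM : M.det ≠ 0) :
    Measure.map (M *ᵥ ·) volume = ENNReal.ofReal |M.det|⁻¹ • volume := by
  simpa [abs_inv, toLin'_apply', coe_mulVecLin] using Real.map_matrix_volume_pi_eq_smul_volume_pi hM

lemma integral_comp_mulVec [NormedSpace ℝ E] (hM : M.det ≠ 0) (f : (ι → ℝ) → E) :
    ∫ η, f (M *ᵥ η) = |M.det|⁻¹ • ∫ ξ, f ξ := by
  rw [← (measurableEmbedding_mulVec hM).integral_map, map_mulVec_volume hM,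
    integral_smul_measure, ENNReal.toReal_ofReal (by positivity)]

lemma integrable_comp_mulVec_iff (hM : M.det ≠ 0) {f : (ι → ℝ) → E} :
    Integrable (fun η ↦ f (M *ᵥ η)) ↔ Integrable f := by
  change Integrable (f ∘ (M *ᵥ ·)) ↔ _
  rw [← (measurableEmbedding_mulVec hM).integrable_map_iff, map_mulVec_volume hM,
    integrable_smul_measure (by simpa using hM) ENNReal.ofReal_ne_top]

end ChangeOfVariables

section GaussianCosineIntegral

variable {ι : Type*} [Fintype ι]

lemma exp_neg_dotProduct_div_four_mul_cos_eq_re (s η : ι → ℝ) :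
    exp (-(η ⬝ᵥ η) / 4) * cos (s ⬝ᵥ η)
      = (Complex.exp (-(1 / 4 : ℂ) * ∑ i, (η i : ℂ) ^ 2 + ∑ i, s i * Complex.I * η i)).re := by
  have harg : -(1 / 4 : ℂ) * ∑ i, (η i : ℂ) ^ 2 + ∑ i, s i * Complex.I * η i
      = ((-(η ⬝ᵥ η) / 4 : ℝ) : ℂ) + ((s ⬝ᵥ η : ℝ) : ℂ) * Complex.I := by
    push_cast [dotProduct, Finset.mul_sum, Finset.sum_mul, Finset.sum_div, ← Finset.sum_neg_distrib,
      ← Finset.sum_add_distrib]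
    exact Finset.sum_congr rfl fun i _ ↦ by ring
  rw [harg, Complex.exp_add, ← Complex.ofReal_exp, Complex.re_ofReal_mul,
    Complex.exp_ofReal_mul_I_re]

lemma integrable_exp_neg_dotProduct_div_four_mul_cos (s : ι → ℝ) :
    Integrable fun η : ι → ℝ ↦ exp (-(η ⬝ᵥ η) / 4) * cos (s ⬝ᵥ η) := by
  simp_rw [exp_neg_dotProduct_div_four_mul_cos_eq_re s]
  exact (GaussianFourier.integrable_cexp_neg_mul_sum_add (by norm_num) _).re

lemma integral_exp_neg_dotProduct_div_four_mul_cos (s : ι → ℝ) :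
    ∫ η : ι → ℝ, exp (-(η ⬝ᵥ η) / 4) * cos (s ⬝ᵥ η)
      = (4 * π) ^ (Fintype.card ι / 2 : ℝ) * exp (-(s ⬝ᵥ s)) := by
  simp_rw [exp_neg_dotProduct_div_four_mul_cos_eq_re s]
  rw [← RCLike.re_eq_complex_re,
    integral_re (GaussianFourier.integrable_cexp_neg_mul_sum_add (by norm_num) _),
    RCLike.re_eq_complex_re, GaussianFourier.integral_cexp_neg_mul_sum_add (by norm_num)]
  have hπ : (π : ℂ) / (1 / 4) = ((4 * π : ℝ) : ℂ) := by push_cast; ring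
  have hsq : (∑ i, (s i * Complex.I) ^ 2) / (4 * (1 / 4)) = ((-(s ⬝ᵥ s) : ℝ) : ℂ) := by
    simp only [mul_pow, Complex.I_sq, dotProduct]
    push_cast
    ring_nf
    exact Finset.sum_neg_distrib _
  rw [hπ, hsq, ← Complex.ofReal_exp, show (Fintype.card ι / 2 : ℂ) = ((Fintype.card ι / 2 : ℝ) : ℂ)
    by push_cast; rfl, ← Complex.ofReal_cpow (by positivity), ← Complex.ofReal_mul,
    Complex.ofReal_re]

end GaussianCosineIntegral

lemma Matrix.IsSymm.dotProduct_mulVec_comm {ι : Type*} [Fintype ι] {A : Matrix ι ι ℝ}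
    (hA : A.IsSymm) (v w : ι → ℝ) : v ⬝ᵥ A *ᵥ w = A *ᵥ v ⬝ᵥ w := by
  rw [dotProduct_mulVec, ← mulVec_transpose, hA.eq]

lemma sum_sum_mul_cos_sub_nonneg {κ : Type*} [Fintype κ] (α θ : κ → ℝ) :
    0 ≤ ∑ i, ∑ j, α i * α j * cos (θ i - θ j) := by
  have hsq : ∑ i, ∑ j, α i * α j * cos (θ i - θ j)
      = (∑ i, α i * cos (θ i)) ^ 2 + (∑ i, α i * sin (θ i)) ^ 2 := by
    simp only [sq, Finset.sum_mul_sum, ← Finset.sum_add_distrib, cos_sub]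
    exact Finset.sum_congr rfl fun i _ ↦ Finset.sum_congr rfl fun j _ ↦ by ring
  rw [hsq]
  positivity

section GaussWeight

variable {ι : Type*} [Fintype ι] [DecidableEq ι] {C C₁ C₂ : Matrix ι ι ℝ}

noncomputable def gaussWeight (C : Matrix ι ι ℝ) (ξ : ι → ℝ) : ℝ :=
  exp (-(ξ ⬝ᵥ (C ^ 2) *ᵥ ξ) / 4)

lemma gaussWeight_le_gaussWeight (h : (C₁ ^ 2 - C₂ ^ 2).PosSemidef) (ξ : ι → ℝ) :
    gaussWeight C₁ ξ ≤ gaussWeight C₂ ξ := by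
  have := h.dotProduct_mulVec_nonneg ξ
  rw [star_trivial, sub_mulVec, dotProduct_sub, sub_nonneg] at this
  unfold gaussWeight
  gcongr

lemma gaussWeight_inv_mulVec (hC : C.IsSymm) (hdet : C.det ≠ 0) (η : ι → ℝ) :
    gaussWeight C (C⁻¹ *ᵥ η) = exp (-(η ⬝ᵥ η) / 4) := by
  have hCC : C ^ 2 * C⁻¹ = C := by
    rw [sq, Matrix.mul_assoc, mul_nonsing_inv _ hdet.isUnit, Matrix.mul_one]
  rw [gaussWeight, mulVec_mulVec, hCC, ← hC.inv.dotProduct_mulVec_comm, mulVec_mulVec,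
    nonsing_inv_mul _ hdet.isUnit, one_mulVec]

lemma gaussWeight_mul_cos_inv_mulVec (hC : C.IsSymm) (hdet : C.det ≠ 0) (t η : ι → ℝ) :
    gaussWeight C (C⁻¹ *ᵥ η) * cos (t ⬝ᵥ C⁻¹ *ᵥ η)
      = exp (-(η ⬝ᵥ η) / 4) * cos (C⁻¹ *ᵥ t ⬝ᵥ η) := by
  rw [gaussWeight_inv_mulVec hC hdet, hC.inv.dotProduct_mulVec_comm]

lemma integrable_gaussWeight_mul_cos (hC : C.IsSymm) (hdet : C.det ≠ 0) (t : ι → ℝ) :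
    Integrable fun ξ ↦ gaussWeight C ξ * cos (t ⬝ᵥ ξ) := by
  rw [← integrable_comp_mulVec_iff ((C.isUnit_nonsing_inv_det hdet.isUnit).ne_zero)]
  simp_rw [gaussWeight_mul_cos_inv_mulVec hC hdet]
  exact integrable_exp_neg_dotProduct_div_four_mul_cos _

lemma integral_gaussWeight_mul_cos (hC : C.IsSymm) (hdet : C.det ≠ 0) (t : ι → ℝ) :
    ∫ ξ, gaussWeight C ξ * cos (t ⬝ᵥ ξ)
      = (4 * π) ^ (Fintype.card ι / 2 : ℝ) / |C.det| * exp (-(t ⬝ᵥ (C⁻¹ ^ 2) *ᵥ t)) := by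
  have hdet' := (C.isUnit_nonsing_inv_det hdet.isUnit).ne_zero
  have := integral_comp_mulVec hdet' fun ξ ↦ gaussWeight C ξ * cos (t ⬝ᵥ ξ)
  simp_rw [gaussWeight_mul_cos_inv_mulVec hC hdet, integral_exp_neg_dotProduct_div_four_mul_cos,
    det_nonsing_inv, Ring.inverse_eq_inv', abs_inv, inv_inv, smul_eq_mul] at this
  rw [div_mul_eq_mul_div, eq_div_iff (abs_ne_zero.mpr hdet), sq, ← mulVec_mulVec,
    hC.inv.dotProduct_mulVec_comm, this, mul_comm]

lemma integrable_gaussWeight_mul_sum_sum_cos {κ : Type*} [Fintype κ] (hC : C.IsSymm)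
    (hdet : C.det ≠ 0) (α : κ → ℝ) (x : κ → ι → ℝ) :
    Integrable fun ξ ↦ gaussWeight C ξ * ∑ i, ∑ j, α i * α j * cos ((x i - x j) ⬝ᵥ ξ) := by
  simp_rw [Finset.mul_sum, mul_left_comm (gaussWeight C _)]
  exact integrable_finsetSum _ fun i _ ↦ integrable_finsetSum _ fun j _ ↦
    (integrable_gaussWeight_mul_cos hC hdet _).const_mul _

end GaussWeight

section GaussKernel

variable {d : ℕ} {C : Matrix (Fin d) (Fin d) ℝ}

lemma gaussKer_eq_integral (hC : C.IsSymm) (hdet : C.det ≠ 0) (x y : Fin d → ℝ) :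
    gaussKer C x y
      = |C.det| / (4 * π) ^ (d / 2 : ℝ) * ∫ ξ, gaussWeight C ξ * cos ((x - y) ⬝ᵥ ξ) := by
  rw [integral_gaussWeight_mul_cos hC hdet, Fintype.card_fin, gaussKer]
  field_simp

lemma sum_sum_mul_gaussKer_eq_integral {κ : Type*} [Fintype κ] (hC : C.IsSymm) (hdet : C.det ≠ 0)
    (α : κ → ℝ) (x : κ → Fin d → ℝ) :
    ∑ i, ∑ j, α i * α j * gaussKer C (x i) (x j)
      = |C.det| / (4 * π) ^ (d / 2 : ℝ)
          * ∫ ξ, gaussWeight C ξ * ∑ i, ∑ j, α i * α j * cos ((x i - x j) ⬝ᵥ ξ) := by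
  have hint i j := (integrable_gaussWeight_mul_cos hC hdet (x i - x j)).const_mul (α i * α j)
  simp_rw [Finset.mul_sum, mul_left_comm (gaussWeight C _)]
  rw [integral_finsetSum _ fun i _ ↦ integrable_finsetSum _ fun j _ ↦ hint i j]
  simp_rw [integral_finsetSum _ fun j _ ↦ hint _ j, integral_const_mul, Finset.mul_sum,
    gaussKer_eq_integral hC hdet, mul_left_comm (|C.det| / _)]

end GaussKernel

theorem gauss_kernel_loewner_mono {d : ℕ} (C₁ C₂ : Matrix (Fin d) (Fin d) ℝ)
    (hC₁ : C₁.PosDef) (hC₂ : C₂.PosDef) (h : (C₁ ^ 2 - C₂ ^ 2).PosSemidef) :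
    KerLE (gaussKer C₁) (fun x y => (C₁.det / C₂.det) * gaussKer C₂ x y) := by
  intro n α x
  have hdet₁ := hC₁.det_pos
  have hdet₂ := hC₂.det_pos
  have hsymm₁ := isHermitian_iff_isSymm.mp hC₁.isHermitian
  have hsymm₂ := isHermitian_iff_isSymm.mp hC₂.isHermitian
  simp_rw [mul_left_comm _ (C₁.det / C₂.det), ← Finset.mul_sum]
  rw [sum_sum_mul_gaussKer_eq_integral hsymm₁ hdet₁.ne',
    sum_sum_mul_gaussKer_eq_integral hsymm₂ hdet₂.ne', abs_of_pos hdet₁, abs_of_pos hdet₂,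
    ← mul_assoc, div_mul_div_cancel₀ hdet₂.ne']
  refine mul_le_mul_of_nonneg_left (integral_mono
    (integrable_gaussWeight_mul_sum_sum_cos hsymm₁ hdet₁.ne' α x)
    (integrable_gaussWeight_mul_sum_sum_cos hsymm₂ hdet₂.ne' α x) fun ξ ↦ ?_) (by positivity)
  have hcos := sum_sum_mul_cos_sub_nonneg α (x · ⬝ᵥ ξ)
  simp only [← sub_dotProduct] at hcos
  exact mul_le_mul_of_nonneg_right (gaussWeight_le_gaussWeight h ξ) hcos
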